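/- Let Λ = {(y₁,y₂,y₃) ∈ ℝ³ : y₁ ∈ 2ℤ, y₂ ∈ ℤ, y₃ ∈ ℤ} and S(y) = (y₁² − y₂²)/|y|⁵. Then the series Σ_{y ∈ Λ, |y|_∞ > 2k} |S'(y)| converges for every integer k ≥ 2, where S'(y) = S(y) − fint_{Q'_y} S(z) dz with Q'_y = y + [−1,1]×[−1/2,1/2]², and moreover |Σ_{y ∈ Λ, |y|_∞ > 2k} S'(y)| ≤ 84π (4k−2)²/(4k−5)³. -/

import Mathlib

/-!
Since the cell `Q'_y` is convex and lies within distance `3/2` of `y`, the mean value theorem and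
the gradient bound `‖∇S z‖ ≤ 3 / ‖z‖⁴` give `|S y - S z| ≤ (9/2) (‖y‖ - 3/2)⁻⁴` on it; the average
of `S` over the cell lies between two of its values there, so the same bound holds for `|S' y|`.
At most `17 n²` lattice points have `|y|_∞ = n`, and for `n ≥ N` the shell contribution
`n² (n - 3/2)⁻⁴` is at most `(N / (N - 3/2))²` times the telescoping difference
`1/(n-2) - 1/(n-1)`. Summing over `n ≥ N = 2k + 1` bounds every finite partial sum of `|S'|`.
-/

open MeasureTheory Real Set
open scoped BigOperators

noncomputable section

abbrev E3 := EuclideanSpace ℝ (Fin 3)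

def S (z : E3) : ℝ := (z 0 ^ 2 - z 1 ^ 2) / ‖z‖ ^ 5

/-- The lattice point of `Λ = 2ℤ × ℤ × ℤ` indexed by `m`. -/
def latt (m : ℤ × ℤ × ℤ) : E3 :=
  (WithLp.equiv 2 (Fin 3 → ℝ)).symm ![2 * (m.1 : ℝ), (m.2.1 : ℝ), (m.2.2 : ℝ)]

/-- The cell `Q'_y = y + [−1,1] × [−1/2,1/2]²`. -/
def cell (y : E3) : Set E3 :=
  {z | z 0 ∈ Icc (y 0 - 1) (y 0 + 1) ∧ z 1 ∈ Icc (y 1 - 1/2) (y 1 + 1/2) ∧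
    z 2 ∈ Icc (y 2 - 1/2) (y 2 + 1/2)}

/-- `S'(y) = S(y) − fint_{Q'_y} S` (the cell has volume 2). -/
def S' (y : E3) : ℝ := S y - (1/2) * ∫ z in cell y, S z

/-- `|y|_∞` of the lattice point indexed by `m`. -/
def ynorm (m : ℤ × ℤ × ℤ) : ℝ := max |2 * (m.1 : ℝ)| (max |(m.2.1 : ℝ)| |(m.2.2 : ℝ)|)

lemma E3.norm_sq_eq (z : E3) : ‖z‖ ^ 2 = z 0 ^ 2 + z 1 ^ 2 + z 2 ^ 2 := by
  simp [EuclideanSpace.norm_sq_eq, Fin.sum_univ_three]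

lemma E3.inner_eq (v w : E3) : inner ℝ v w = v 0 * w 0 + v 1 * w 1 + v 2 * w 2 := by
  simp [PiLp.inner_apply, Fin.sum_univ_three, mul_comm]

lemma rpow_sq_neg_div_two {r : ℝ} (hr : 0 ≤ r) (n : ℕ) : (r ^ 2) ^ (-(n : ℝ) / 2) = (r ^ n)⁻¹ := by
  rw [← Real.rpow_natCast r 2, ← Real.rpow_mul hr, Nat.cast_ofNat,
    mul_div_cancel₀ _ two_ne_zero, Real.rpow_neg hr, Real.rpow_natCast]

def gradS (z : E3) : E3 :=
  (‖z‖ ^ 7)⁻¹ • WithLp.toLp 2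
    ![2 * ‖z‖ ^ 2 * z 0 - 5 * (z 0 ^ 2 - z 1 ^ 2) * z 0,
      -2 * ‖z‖ ^ 2 * z 1 - 5 * (z 0 ^ 2 - z 1 ^ 2) * z 1,
      -5 * (z 0 ^ 2 - z 1 ^ 2) * z 2]

lemma hasFDerivAt_coord_sq (i : Fin 3) (z : E3) :
    HasFDerivAt (fun w : E3 => w i ^ 2) ((2 * z i) • EuclideanSpace.proj (𝕜 := ℝ) i) z := by
  have h := (EuclideanSpace.proj (𝕜 := ℝ) i).hasFDerivAt (x := z)
  simpa using h.pow 2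

lemma hasFDerivAt_S {z : E3} (hz : z ≠ 0) : HasFDerivAt S (innerSL ℝ (gradS z)) z := by
  have hrpow : HasFDerivAt (fun w : E3 => (‖w‖ ^ 2) ^ (-(5 / 2) : ℝ))
      ((-(5 / 2) * (‖z‖ ^ 2) ^ (-(5 / 2) - 1 : ℝ)) • (2 • innerSL ℝ z)) z :=
    (Real.hasDerivAt_rpow_const (Or.inl (by positivity))).comp_hasFDerivAt z
      (hasStrictFDerivAt_norm_sq z).hasFDerivAt
  have h := ((hasFDerivAt_coord_sq 0 z).sub (hasFDerivAt_coord_sq 1 z)).mul hrpow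
  have h5 (w : E3) : (‖w‖ ^ 2) ^ (-(5 / 2) : ℝ) = (‖w‖ ^ 5)⁻¹ := by
    simpa [neg_div] using rpow_sq_neg_div_two (norm_nonneg w) 5
  have h7 : (‖z‖ ^ 2) ^ (-(5 / 2) - 1 : ℝ) = (‖z‖ ^ 7)⁻¹ := by
    rw [← rpow_sq_neg_div_two (norm_nonneg z)]; norm_num
  have hS : S = (fun w : E3 => w 0 ^ 2 - w 1 ^ 2) * fun w => (‖w‖ ^ 2) ^ (-(5 / 2) : ℝ) := by
    funext w
    rw [Pi.mul_apply, h5, S, div_eq_mul_inv]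
  rw [hS]
  refine h.congr_fderiv (ContinuousLinearMap.ext fun v => ?_)
  have hr : ‖z‖ ≠ 0 := norm_ne_zero_iff.mpr hz
  simp only [h7, h5]
  simp only [Pi.sub_apply, add_apply, smul_apply, sub_apply, coe_innerSL_apply, E3.inner_eq,
    gradS, smul_eq_mul, nsmul_eq_mul, PiLp.proj_apply, map_smul, Matrix.cons_val_zero,
    Matrix.cons_val_one, Matrix.cons_val]
  field_simp
  ring

lemma norm_gradS_le {z : E3} (hz : z ≠ 0) : ‖gradS z‖ ≤ 3 / ‖z‖ ^ 4 := by
  have hr : 0 < ‖z‖ := norm_pos_iff.mpr hz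
  set a := z 0; set b := z 1; set c := z 2
  set v : E3 := WithLp.toLp 2
    ![2 * ‖z‖ ^ 2 * a - 5 * (a ^ 2 - b ^ 2) * a, -2 * ‖z‖ ^ 2 * b - 5 * (a ^ 2 - b ^ 2) * b,
      -5 * (a ^ 2 - b ^ 2) * c]
  have hv : ‖v‖ ≤ 3 * ‖z‖ ^ 3 := by
    refine (pow_le_pow_iff_left₀ (norm_nonneg v) (by positivity) two_ne_zero).mp ?_
    have hz2 : ‖z‖ ^ 2 = a ^ 2 + b ^ 2 + c ^ 2 := E3.norm_sq_eq z
    have key : (3 * ‖z‖ ^ 3) ^ 2 - ‖v‖ ^ 2 =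
        (a ^ 2 + b ^ 2 + c ^ 2) * (4 * (a ^ 2 + b ^ 2 + c ^ 2) * c ^ 2
          + 5 * (2 * b ^ 2 + c ^ 2) * (2 * a ^ 2 + c ^ 2)) := by
      rw [E3.norm_sq_eq v, show (3 * ‖z‖ ^ 3) ^ 2 = 9 * (‖z‖ ^ 2) ^ 3 by ring]
      simp only [v, Matrix.cons_val_zero, Matrix.cons_val_one, Matrix.cons_val_two,
        Matrix.head_cons, Matrix.tail_cons, hz2]
      ring
    linarith [show 0 ≤ (a ^ 2 + b ^ 2 + c ^ 2) * (4 * (a ^ 2 + b ^ 2 + c ^ 2) * c ^ 2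
          + 5 * (2 * b ^ 2 + c ^ 2) * (2 * a ^ 2 + c ^ 2)) by positivity]
  calc ‖gradS z‖ = (‖z‖ ^ 7)⁻¹ * ‖v‖ := by
        rw [gradS, norm_smul, Real.norm_of_nonneg (by positivity)]
    _ ≤ (‖z‖ ^ 7)⁻¹ * (3 * ‖z‖ ^ 3) := by gcongr
    _ = 3 / ‖z‖ ^ 4 := by field_simp

def cellRadius : Fin 3 → ℝ := ![1, 1 / 2, 1 / 2]

lemma cell_eq_preimage_Icc (y : E3) :
    cell y = WithLp.ofLp ⁻¹' Icc (WithLp.ofLp y - cellRadius) (WithLp.ofLp y + cellRadius) := by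
  ext z
  simp [cell, Pi.le_def, Fin.forall_fin_succ, cellRadius]
  tauto

lemma volume_cell (y : E3) : volume (cell y) = 2 := by
  rw [cell_eq_preimage_Icc, (PiLp.volume_preserving_ofLp (Fin 3)).measure_preimage
      measurableSet_Icc.nullMeasurableSet, Real.volume_Icc_pi, Fin.prod_univ_three]
  simp only [Pi.add_apply, Pi.sub_apply, add_sub_sub_cancel, cellRadius, Matrix.cons_val_zero,
    Matrix.cons_val_one, Matrix.cons_val]
  norm_num

lemma isCompact_cell (y : E3) : IsCompact (cell y) := by
  rw [cell_eq_preimage_Icc]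
  exact (PiLp.continuousLinearEquiv 2 ℝ (fun _ : Fin 3 => ℝ)).toHomeomorph.isCompact_preimage.mpr
    isCompact_Icc

lemma convex_cell (y : E3) : Convex ℝ (cell y) := by
  rw [cell_eq_preimage_Icc]
  exact (convex_Icc _ _).linear_preimage (WithLp.linearEquiv 2 ℝ (Fin 3 → ℝ)).toLinearMap

lemma mem_cell_self (y : E3) : y ∈ cell y := by
  simp [cell]

lemma norm_sub_le_of_mem_cell {y z : E3} (hz : z ∈ cell y) : ‖y - z‖ ≤ 3 / 2 := by
  obtain ⟨⟨h0, h0'⟩, ⟨h1, h1'⟩, ⟨h2, h2'⟩⟩ := hz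
  have : ‖y - z‖ ^ 2 ≤ (3 / 2) ^ 2 := by
    rw [E3.norm_sq_eq]
    simp only [PiLp.sub_apply]
    nlinarith
  exact (pow_le_pow_iff_left₀ (norm_nonneg _) (by norm_num) two_ne_zero).mp this

lemma abs_sub_setAverage_le {α : Type*} [MeasurableSpace α] {μ : Measure α} {s : Set α}
    {f : α → ℝ} {x : α} {C : ℝ} (hμ : μ s ≠ 0) (hμ₁ : μ s ≠ ⊤) (hf : IntegrableOn f s μ)
    (hC : ∀ z ∈ s, |f x - f z| ≤ C) : |f x - ⨍ z in s, f z ∂μ| ≤ C := by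
  obtain ⟨z₁, hz₁, hle⟩ := exists_le_setAverage hμ hμ₁ hf
  obtain ⟨z₂, hz₂, hge⟩ := exists_setAverage_le hμ hμ₁ hf
  have h₁ := (abs_le.mp (hC z₁ hz₁)).2
  have h₂ := (abs_le.mp (hC z₂ hz₂)).1
  exact abs_le.mpr ⟨by linarith, by linarith⟩

lemma S'_eq_sub_setAverage (y : E3) : S' y = S y - ⨍ z in cell y, S z := by
  rw [S', setAverage_eq, measureReal_def, volume_cell, smul_eq_mul]
  norm_num

lemma sub_le_norm_of_mem_cell {y w : E3} (hw : w ∈ cell y) : ‖y‖ - 3 / 2 ≤ ‖w‖ := by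
  linarith [norm_sub_norm_le y w, norm_sub_le_of_mem_cell hw]

lemma ne_zero_of_mem_cell {y w : E3} (hy : 3 / 2 < ‖y‖) (hw : w ∈ cell y) : w ≠ 0 := by
  rw [← norm_pos_iff]
  linarith [sub_le_norm_of_mem_cell hw]

lemma abs_S_sub_le_of_mem_cell {y z : E3} (hy : 3 / 2 < ‖y‖) (hz : z ∈ cell y) :
    |S y - S z| ≤ 9 / 2 / (‖y‖ - 3 / 2) ^ 4 := by
  have hgrad : ∀ w ∈ cell y, ‖innerSL ℝ (gradS w)‖ ≤ 3 / (‖y‖ - 3 / 2) ^ 4 := fun w hw => by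
    rw [innerSL_apply_norm]
    refine (norm_gradS_le (ne_zero_of_mem_cell hy hw)).trans ?_
    gcongr
    exact sub_le_norm_of_mem_cell hw
  have hmvt := (convex_cell y).norm_image_sub_le_of_norm_hasFDerivWithin_le
    (fun w hw => (hasFDerivAt_S (ne_zero_of_mem_cell hy hw)).hasFDerivWithinAt) hgrad hz
    (mem_cell_self y)
  calc |S y - S z| ≤ 3 / (‖y‖ - 3 / 2) ^ 4 * ‖y - z‖ := hmvt
    _ ≤ 3 / (‖y‖ - 3 / 2) ^ 4 * (3 / 2) := by gcongr; exact norm_sub_le_of_mem_cell hz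
    _ = 9 / 2 / (‖y‖ - 3 / 2) ^ 4 := by ring

lemma abs_S'_le {y : E3} (hy : 3 / 2 < ‖y‖) : |S' y| ≤ 9 / 2 / (‖y‖ - 3 / 2) ^ 4 := by
  have hcont : ContinuousOn S (cell y) := fun w hw =>
    (hasFDerivAt_S (ne_zero_of_mem_cell hy hw)).continuousAt.continuousWithinAt
  rw [S'_eq_sub_setAverage]
  exact abs_sub_setAverage_le (by simp [volume_cell]) (by simp [volume_cell])
    (hcont.integrableOn_compact (isCompact_cell y)) fun z hz => abs_S_sub_le_of_mem_cell hy hz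

def supNormNat (m : ℤ × ℤ × ℤ) : ℕ := max (2 * m.1.natAbs) (max m.2.1.natAbs m.2.2.natAbs)

lemma ynorm_eq_supNormNat (m : ℤ × ℤ × ℤ) : ynorm m = supNormNat m := by
  simp [ynorm, supNormNat, Nat.cast_natAbs, abs_mul]

lemma supNormNat_le_norm_latt (m : ℤ × ℤ × ℤ) : (supNormNat m : ℝ) ≤ ‖latt m‖ := by
  rw [← ynorm_eq_supNormNat]
  refine max_le ?_ (max_le ?_ ?_)
  · simpa [latt] using PiLp.norm_apply_le (latt m) 0
  · simpa [latt] using PiLp.norm_apply_le (latt m) 1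
  · simpa [latt] using PiLp.norm_apply_le (latt m) 2

lemma abs_S'_latt_le {m : ℤ × ℤ × ℤ} (hm : 2 ≤ supNormNat m) :
    |S' (latt m)| ≤ 9 / 2 / ((supNormNat m : ℝ) - 3 / 2) ^ 4 := by
  have hm' : (2 : ℝ) ≤ supNormNat m := by exact_mod_cast hm
  have hnorm := supNormNat_le_norm_latt m
  have hpos : 0 < (supNormNat m : ℝ) - 3 / 2 := by linarith
  refine (abs_S'_le (by linarith)).trans ?_
  gcongr

def latticeBox (a b : ℕ) : Finset (ℤ × ℤ × ℤ) :=
  Finset.Icc (-(a : ℤ)) a ×ˢ Finset.Icc (-(b : ℤ)) b ×ˢ Finset.Icc (-(b : ℤ)) b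

lemma card_latticeBox (a b : ℕ) :
    (latticeBox a b).card = (2 * a + 1) * ((2 * b + 1) * (2 * b + 1)) := by
  simp only [latticeBox, Finset.card_product, Int.card_Icc]
  congr 1 <;> [skip; congr 1] <;> omega

lemma mem_latticeBox {a b : ℕ} {m : ℤ × ℤ × ℤ} :
    m ∈ latticeBox a b ↔ m.1.natAbs ≤ a ∧ m.2.1.natAbs ≤ b ∧ m.2.2.natAbs ≤ b := by
  simp only [latticeBox, Finset.mem_product, Finset.mem_Icc]
  omega

-- the shell `supNormNat = n` is the difference of two boxes
lemma card_filter_supNormNat_eq_le (s : Finset (ℤ × ℤ × ℤ)) {n : ℕ} (hn : 2 ≤ n) :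
    (s.filter fun m => supNormNat m = n).card ≤ 17 * n ^ 2 := by
  have hsub : s.filter (fun m => supNormNat m = n) ⊆
      latticeBox (n / 2) n \ latticeBox ((n - 1) / 2) (n - 1) := by
    intro m hm
    have h := (Finset.mem_filter.mp hm).2
    simp only [supNormNat] at h
    rw [Finset.mem_sdiff, mem_latticeBox, mem_latticeBox]
    omega
  have hbox : latticeBox ((n - 1) / 2) (n - 1) ⊆ latticeBox (n / 2) n := by
    intro m
    simp only [mem_latticeBox]
    omega
  refine (Finset.card_le_card hsub).trans ?_
  rw [Finset.card_sdiff_of_subset hbox, card_latticeBox, card_latticeBox, Nat.sub_le_iff_le_add]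
  zify [show 1 ≤ n by omega]
  have hn' : (2 : ℤ) ≤ n := by exact_mod_cast hn
  nlinarith [mul_le_mul_of_nonneg_right (show 2 * ((n : ℤ) / 2) + 1 ≤ n + 1 by omega)
      (mul_self_nonneg (2 * (n : ℤ) + 1)),
    mul_le_mul_of_nonneg_right (show (n : ℤ) - 1 ≤ 2 * (((n : ℤ) - 1) / 2) + 1 by omega)
      (mul_self_nonneg (2 * ((n : ℤ) - 1) + 1))]

lemma sq_div_sub_pow_four_le {a x : ℝ} (ha : 2 < a) (hx : a ≤ x) :
    x ^ 2 / (x - 3 / 2) ^ 4 ≤ (a / (a - 3 / 2)) ^ 2 * ((x - 2)⁻¹ - (x - 1)⁻¹) := by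
  have hratio : x / (x - 3 / 2) ≤ a / (a - 3 / 2) := by
    rw [div_le_div_iff₀ (by linarith) (by linarith)]
    linarith
  have hsq : (x - 2) * (x - 1) ≤ (x - 3 / 2) ^ 2 := by nlinarith
  have hprod : 0 < (x - 2) * (x - 1) := by nlinarith
  calc x ^ 2 / (x - 3 / 2) ^ 4 = (x / (x - 3 / 2)) ^ 2 * ((x - 3 / 2) ^ 2)⁻¹ := by
        field_simp
    _ ≤ (a / (a - 3 / 2)) ^ 2 * ((x - 2) * (x - 1))⁻¹ := by
        gcongr
        exact div_nonneg (by linarith) (by linarith)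
    _ = (a / (a - 3 / 2)) ^ 2 * ((x - 2)⁻¹ - (x - 1)⁻¹) := by
        rw [inv_sub_inv (by linarith) (by linarith)]
        ring

lemma sum_Icc_inv_sub_inv_le {N : ℕ} (hN : 2 < N) (T : ℕ) :
    ∑ n ∈ Finset.Icc N T, (((n : ℝ) - 2)⁻¹ - ((n : ℝ) - 1)⁻¹) ≤ ((N : ℝ) - 2)⁻¹ := by
  have hN' : (2 : ℝ) < N := by exact_mod_cast hN
  rcases le_or_gt N T with hNT | hTN
  · have h := Finset.sum_Icc_sub hNT fun n : ℕ => -((n : ℝ) - 2)⁻¹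
    simp only [Nat.cast_add, Nat.cast_one, sub_neg_eq_add, neg_add_eq_sub] at h
    have hT : (0 : ℝ) ≤ ((T : ℝ) + 1 - 2)⁻¹ := by
      have : (N : ℝ) ≤ T := by exact_mod_cast hNT
      exact inv_nonneg.mpr (by linarith)
    calc ∑ n ∈ Finset.Icc N T, (((n : ℝ) - 2)⁻¹ - ((n : ℝ) - 1)⁻¹)
        = ((N : ℝ) - 2)⁻¹ - ((T : ℝ) + 1 - 2)⁻¹ := by
          rw [← h]
          refine Finset.sum_congr rfl fun n _ => ?_
          ring_nf
      _ ≤ ((N : ℝ) - 2)⁻¹ := by linarith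
  · rw [Finset.Icc_eq_empty_of_lt hTN, Finset.sum_empty]
    exact inv_nonneg.mpr (by linarith)

lemma sum_abs_S'_latt_le {N : ℕ} (hN : 3 ≤ N) (s : Finset (ℤ × ℤ × ℤ))
    (hs : ∀ m ∈ s, N ≤ supNormNat m) :
    ∑ m ∈ s, |S' (latt m)| ≤ 153 / 2 * (N : ℝ) ^ 2 / (((N : ℝ) - 3 / 2) ^ 2 * ((N : ℝ) - 2)) := by
  set T := s.sup supNormNat
  have hmaps : ∀ m ∈ s, supNormNat m ∈ Finset.Icc N T := fun m hm =>
    Finset.mem_Icc.mpr ⟨hs m hm, Finset.le_sup hm⟩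
  have hN' : (3 : ℝ) ≤ N := by exact_mod_cast hN
  have hshell : ∀ n ∈ Finset.Icc N T,
      ∑ m ∈ s with supNormNat m = n, 9 / 2 / ((supNormNat m : ℝ) - 3 / 2) ^ 4
        ≤ 17 * (n : ℝ) ^ 2 * (9 / 2 / ((n : ℝ) - 3 / 2) ^ 4) := by
    intro n hn
    have hNn : N ≤ n := (Finset.mem_Icc.mp hn).1
    rw [Finset.sum_congr rfl fun m hm => by rw [(Finset.mem_filter.mp hm).2], Finset.sum_const,
      nsmul_eq_mul]
    gcongr
    exact_mod_cast card_filter_supNormNat_eq_le s (by omega)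
  have hterm : ∀ n ∈ Finset.Icc N T, 17 * (n : ℝ) ^ 2 * (9 / 2 / ((n : ℝ) - 3 / 2) ^ 4)
      ≤ 153 / 2 * ((N : ℝ) / (N - 3 / 2)) ^ 2 * (((n : ℝ) - 2)⁻¹ - ((n : ℝ) - 1)⁻¹) := by
    intro n hn
    have hNn : (N : ℝ) ≤ n := by exact_mod_cast (Finset.mem_Icc.mp hn).1
    have := sq_div_sub_pow_four_le (by linarith) hNn
    calc 17 * (n : ℝ) ^ 2 * (9 / 2 / ((n : ℝ) - 3 / 2) ^ 4)
        = 153 / 2 * ((n : ℝ) ^ 2 / ((n : ℝ) - 3 / 2) ^ 4) := by ring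
      _ ≤ _ := by rw [mul_assoc]; gcongr
  calc ∑ m ∈ s, |S' (latt m)|
      ≤ ∑ m ∈ s, 9 / 2 / ((supNormNat m : ℝ) - 3 / 2) ^ 4 :=
        Finset.sum_le_sum fun m hm => abs_S'_latt_le (by linarith [hs m hm])
    _ = ∑ n ∈ Finset.Icc N T, ∑ m ∈ s with supNormNat m = n,
          9 / 2 / ((supNormNat m : ℝ) - 3 / 2) ^ 4 :=
        (Finset.sum_fiberwise_of_maps_to hmaps _).symm
    _ ≤ ∑ n ∈ Finset.Icc N T,
          153 / 2 * ((N : ℝ) / (N - 3 / 2)) ^ 2 * (((n : ℝ) - 2)⁻¹ - ((n : ℝ) - 1)⁻¹) :=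
        Finset.sum_le_sum fun n hn => (hshell n hn).trans (hterm n hn)
    _ ≤ 153 / 2 * ((N : ℝ) / (N - 3 / 2)) ^ 2 * ((N : ℝ) - 2)⁻¹ := by
        rw [← Finset.mul_sum]
        gcongr
        exact sum_Icc_inv_sub_inv_le (by omega) T
    _ = 153 / 2 * (N : ℝ) ^ 2 / (((N : ℝ) - 3 / 2) ^ 2 * ((N : ℝ) - 2)) := by
        field_simp

lemma tail_constant_le {x : ℝ} (hx : 2 ≤ x) :
    153 / 2 * (2 * x + 1) ^ 2 / ((2 * x + 1 - 3 / 2) ^ 2 * (2 * x + 1 - 2))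
      ≤ 84 * π * (4 * x - 2) ^ 2 / (4 * x - 5) ^ 3 := by
  rw [div_le_div_iff₀ (mul_pos (by nlinarith) (by linarith)) (pow_pos (by linarith) 3)]
  have hcross : ((4 * x + 2) * (4 * x - 5)) ^ 2 * (4 * x - 5)
      ≤ ((4 * x - 1) * (4 * x - 2)) ^ 2 * (4 * x - 2) :=
    mul_le_mul (pow_le_pow_left₀ (mul_nonneg (by linarith) (by linarith)) (by nlinarith) 2)
      (by linarith) (by linarith) (by positivity)
  have hπ : (153 : ℝ) ≤ 84 * π := by linarith [Real.pi_gt_three]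
  nlinarith [mul_le_mul hπ hcross (by nlinarith) (by positivity)]

lemma summable_abs_and_abs_tsum_le {ι : Type*} {f : ι → ℝ} {C : ℝ}
    (h : ∀ s : Finset ι, ∑ i ∈ s, |f i| ≤ C) : Summable (fun i => |f i|) ∧ |∑' i, f i| ≤ C := by
  have hsum := summable_of_sum_le (fun _ => abs_nonneg _) h
  refine ⟨hsum, ?_⟩
  calc |∑' i, f i| ≤ ∑' i, |f i| := by
        simpa only [Real.norm_eq_abs] using norm_tsum_le_tsum_norm (f := f) hsum
    _ ≤ C := hsum.tsum_le_of_sum_le h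

/-- for `k ≥ 2`, the series `Σ_{y ∈ Λ, |y|_∞ > 2k} S'(y)` converges
absolutely and `|Σ_{y ∈ Λ, |y|_∞ > 2k} S'(y)| ≤ 84π(4k−2)²/(4k−5)³`. -/
theorem stmt8 (k : ℕ) (hk : 2 ≤ k) :
    Summable (fun p : {m : ℤ × ℤ × ℤ // 2 * (k : ℝ) < ynorm m} => |S' (latt p.1)|) ∧
    |∑' p : {m : ℤ × ℤ × ℤ // 2 * (k : ℝ) < ynorm m}, S' (latt p.1)|
      ≤ 84 * π * (4 * (k : ℝ) - 2) ^ 2 / (4 * (k : ℝ) - 5) ^ 3 := by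
  refine summable_abs_and_abs_tsum_le fun s => ?_
  refine (Finset.sum_map s (Function.Embedding.subtype _) fun m => |S' (latt m)|).ge.trans ?_
  refine (sum_abs_S'_latt_le (N := 2 * k + 1) (by omega) _ fun m hm => ?_).trans ?_
  · obtain ⟨p, -, rfl⟩ := Finset.mem_map.mp hm
    have h : 2 * (k : ℝ) < supNormNat p.1 := ynorm_eq_supNormNat p.1 ▸ p.2
    exact_mod_cast h
  · push_cast
    exact tail_constant_le (by exact_mod_cast hk)

end
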